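/- Let $H$ be a Hilbert space, $T : H \to H$ nonexpansive with $T(0)=0$ (hence $\|T\varphi\| \le \|\varphi\|$), $d_k \in [0,1]$ with $\sum_k d_k(1-d_k) = \infty$, and suppose $T$ has a fixed point. Define $\phi_{k+1} := (1-d_k)\phi_k + d_k T(\phi_k)$ from any $\phi_1 \in H$. Then $\|\phi_k - T(\phi_k)\| \to 0$ as $k \to \infty$. -/

import Mathlib

/-!
Fix a fixed point `p` of `T`. Expanding squares in the inner product gives the Fejér
inequality `‖φₖ₊₁ - p‖² ≤ ‖φₖ - p‖² - dₖ(1 - dₖ)‖φₖ - Tφₖ‖²`, so `∑ dₖ(1 - dₖ)‖φₖ - Tφₖ‖²`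
is bounded by `‖φ₀ - p‖²`. Nonexpansiveness also makes the residual `‖φₖ - Tφₖ‖`
nonincreasing, hence `‖φₙ - Tφₙ‖² ∑_{k<n} dₖ(1 - dₖ) ≤ ‖φ₀ - p‖²`, and the divergence of
`∑ dₖ(1 - dₖ)` forces the residual to zero.
-/

open Filter Topology Finset

def mannStep {E : Type*} [AddCommGroup E] [Module ℝ E] (T : E → E) (t : ℝ) (x : E) : E :=
  (1 - t) • x + t • T x

theorem norm_one_sub_smul_add_smul_sq {E : Type*} [NormedAddCommGroup E] [InnerProductSpace ℝ E]
    (t : ℝ) (x y : E) :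
    ‖(1 - t) • x + t • y‖ ^ 2 = (1 - t) * ‖x‖ ^ 2 + t * ‖y‖ ^ 2 - t * (1 - t) * ‖x - y‖ ^ 2 := by
  rw [norm_add_sq_real, norm_sub_sq_real, real_inner_smul_left, real_inner_smul_right,
    norm_smul, norm_smul, mul_pow, mul_pow, Real.norm_eq_abs, Real.norm_eq_abs, sq_abs, sq_abs]
  ring

theorem norm_mannStep_sub_apply_le {E : Type*} [NormedAddCommGroup E] [NormedSpace ℝ E]
    {T : E → E} (hT : ∀ x y, ‖T x - T y‖ ≤ ‖x - y‖) {t : ℝ} (ht₀ : 0 ≤ t) (ht₁ : t ≤ 1) (x : E) :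
    ‖mannStep T t x - T (mannStep T t x)‖ ≤ ‖x - T x‖ := by
  have hstep : ‖mannStep T t x - T x‖ = (1 - t) * ‖x - T x‖ := by
    rw [show mannStep T t x - T x = (1 - t) • (x - T x) by unfold mannStep; module,
      norm_smul, Real.norm_of_nonneg (sub_nonneg.2 ht₁)]
  have hmove : ‖T (mannStep T t x) - T x‖ ≤ t * ‖x - T x‖ :=
    calc ‖T (mannStep T t x) - T x‖ ≤ ‖mannStep T t x - x‖ := hT _ _
      _ = t * ‖x - T x‖ := by
        rw [show mannStep T t x - x = (-t) • (x - T x) by unfold mannStep; module,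
          norm_smul, norm_neg, Real.norm_of_nonneg ht₀]
  calc ‖mannStep T t x - T (mannStep T t x)‖
      = ‖(mannStep T t x - T x) - (T (mannStep T t x) - T x)‖ := by abel_nf
    _ ≤ ‖mannStep T t x - T x‖ + ‖T (mannStep T t x) - T x‖ := norm_sub_le _ _
    _ ≤ ‖x - T x‖ := by rw [hstep]; linarith

theorem norm_mannStep_sub_sq_le {E : Type*} [NormedAddCommGroup E] [InnerProductSpace ℝ E]
    {T : E → E} {p : E} (hTp : ∀ x, ‖T x - p‖ ≤ ‖x - p‖) {t : ℝ} (ht₀ : 0 ≤ t) (x : E) :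
    ‖mannStep T t x - p‖ ^ 2 ≤ ‖x - p‖ ^ 2 - t * (1 - t) * ‖x - T x‖ ^ 2 := by
  have hsplit : mannStep T t x - p = (1 - t) • (x - p) + t • (T x - p) := by
    unfold mannStep; module
  have hsq : ‖T x - p‖ ^ 2 ≤ ‖x - p‖ ^ 2 := pow_le_pow_left₀ (norm_nonneg _) (hTp x) 2
  rw [hsplit, norm_one_sub_smul_add_smul_sq, sub_sub_sub_cancel_right]
  nlinarith

theorem sum_range_le_of_le_sub {u c : ℕ → ℝ} (hu : ∀ k, u (k + 1) ≤ u k - c k)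
    (hu₀ : ∀ k, 0 ≤ u k) (n : ℕ) : ∑ k ∈ range n, c k ≤ u 0 := by
  have htel : ∑ k ∈ range n, c k ≤ ∑ k ∈ range n, (u k - u (k + 1)) :=
    sum_le_sum fun k _ => by linarith [hu k]
  rw [sum_range_sub'] at htel
  linarith [hu₀ n]

theorem tendsto_zero_of_antitone_of_sum_mul_le {b w : ℕ → ℝ} {C : ℝ} (hb : Antitone b)
    (hb₀ : ∀ n, 0 ≤ b n) (hw : ∀ k, 0 ≤ w k)
    (hdiv : Tendsto (fun n => ∑ k ∈ range n, w k) atTop atTop)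
    (hC : ∀ n, ∑ k ∈ range n, w k * b k ≤ C) :
    Tendsto b atTop (𝓝 0) := by
  have hbound : ∀ n, (∑ k ∈ range n, w k) * b n ≤ C := fun n =>
    calc (∑ k ∈ range n, w k) * b n = ∑ k ∈ range n, w k * b n := sum_mul _ _ _
      _ ≤ ∑ k ∈ range n, w k * b k := sum_le_sum fun k hk =>
          mul_le_mul_of_nonneg_left (hb (mem_range.1 hk).le) (hw k)
      _ ≤ C := hC n
  refine tendsto_of_tendsto_of_tendsto_of_le_of_le' tendsto_const_nhds
    ((tendsto_const_nhds (x := C)).div_atTop hdiv) (Eventually.of_forall hb₀) ?_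
  filter_upwards [hdiv.eventually_gt_atTop 0] with n hn
  rw [le_div_iff₀ hn, mul_comm]
  exact hbound n

theorem groetsch_asymptotic_regularity_general
    {H : Type*} [NormedAddCommGroup H] [InnerProductSpace ℝ H]
    (T : H → H) (hTne : ∀ x y : H, ‖T x - T y‖ ≤ ‖x - y‖)
    (hfix : ∃ x : H, T x = x)
    (d : ℕ → ℝ) (hd01 : ∀ k, 0 ≤ d k ∧ d k ≤ 1)
    (hdiv : Tendsto (fun n => ∑ k ∈ Finset.range n, d k * (1 - d k))
      atTop atTop)
    (φ : ℕ → H)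
    (hrec : ∀ k, φ (k + 1) = (1 - d k) • φ k + d k • T (φ k)) :
    Tendsto (fun k => ‖φ k - T (φ k)‖) atTop (nhds 0) := by
  obtain ⟨p, hp⟩ := hfix
  have hTp : ∀ x, ‖T x - p‖ ≤ ‖x - p‖ := fun x => by simpa only [hp] using hTne x p
  have hres : Antitone fun k => ‖φ k - T (φ k)‖ ^ 2 := by
    refine antitone_nat_of_succ_le fun k => pow_le_pow_left₀ (norm_nonneg _) ?_ 2
    rw [hrec k]
    exact norm_mannStep_sub_apply_le hTne (hd01 k).1 (hd01 k).2 (φ k)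
  have hfejer : ∀ k, ‖φ (k + 1) - p‖ ^ 2 ≤
      ‖φ k - p‖ ^ 2 - d k * (1 - d k) * ‖φ k - T (φ k)‖ ^ 2 := fun k => by
    rw [hrec k]
    exact norm_mannStep_sub_sq_le hTp (hd01 k).1 (φ k)
  have hsq : Tendsto (fun k => ‖φ k - T (φ k)‖ ^ 2) atTop (𝓝 0) :=
    tendsto_zero_of_antitone_of_sum_mul_le hres (fun _ => by positivity)
      (fun k => mul_nonneg (hd01 k).1 (sub_nonneg.2 (hd01 k).2)) hdiv
      (sum_range_le_of_le_sub (u := fun k => ‖φ k - p‖ ^ 2)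
        (by simpa only [mul_assoc] using hfejer) (fun _ => by positivity))
  simpa only [Real.sqrt_sq (norm_nonneg _), Real.sqrt_zero] using hsq.sqrt

/-- Groetsch's asymptotic regularity for the segmenting Mann
iteration of a nonexpansive map with a fixed point. -/
theorem groetsch_asymptotic_regularity
    {H : Type*} [NormedAddCommGroup H] [InnerProductSpace ℝ H] [CompleteSpace H]
    (T : H → H) (hTne : ∀ x y : H, ‖T x - T y‖ ≤ ‖x - y‖) (hT0 : T 0 = 0)
    (hfix : ∃ x : H, T x = x)
    (d : ℕ → ℝ) (hd01 : ∀ k, 0 ≤ d k ∧ d k ≤ 1)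
    (hdiv : Tendsto (fun n => ∑ k ∈ Finset.range n, d k * (1 - d k))
      atTop atTop)
    (φ : ℕ → H)
    (hrec : ∀ k, φ (k + 1) = (1 - d k) • φ k + d k • T (φ k)) :
    Tendsto (fun k => ‖φ k - T (φ k)‖) atTop (nhds 0) :=
  groetsch_asymptotic_regularity_general T hTne hfix d hd01 hdiv φ hrec
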